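/- For n = 2 agents with bipartition ({1},{2}), the matching output by Match: a maximum cardinality matching among those that restrict to maximum matchings on G[V_1] and G[V_2], is inclusion-maximal in G, and hence has cardinality at least half that of a maximum matching of G. -/

import Mathlib

/-! A matching of maximum size among those whose internal parts are maximum matchings of
`G[V₁]` and `G[V₂]` is inclusion-maximal: adding an edge only enlarges the internal parts, so
the enlarged matching would still be admissible and larger. A maximal matching `M` meets every
edge of `G`, so the at most `2 |M|` vertices it covers form a vertex cover, and a matching is no
larger than a vertex cover. -/

open Finset
open scoped Classical symmDiff

/-- `M` is a matching of the simple graph `G`: a finite set of edges of `G`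
that are pairwise vertex-disjoint. -/
def IsMatching {V : Type*} (G : SimpleGraph V) (M : Finset (Sym2 V)) : Prop :=
  ↑M ⊆ G.edgeSet ∧ ∀ v : V, ∀ e ∈ M, ∀ f ∈ M, v ∈ e → v ∈ f → e = f

/-- `v` is covered (matched) by the edge set `M`. -/
def Covers {V : Type*} (M : Finset (Sym2 V)) (v : V) : Prop :=
  ∃ e ∈ M, v ∈ e

/-- Internal edges within `A`. -/
noncomputable def internalEdges {V : Type*} (A : Finset V) (M : Finset (Sym2 V)) :
    Finset (Sym2 V) :=
  M.filter (fun e => ∀ v ∈ e, v ∈ A)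

section

variable {V : Type*} {G : SimpleGraph V}

def InternallyMaximum (G : SimpleGraph V) (A : Finset V) (M : Finset (Sym2 V)) : Prop :=
  ∀ N : Finset (Sym2 V), IsMatching G N → (∀ e ∈ N, ∀ v ∈ e, v ∈ A) →
    N.card ≤ (internalEdges A M).card

lemma internalEdges_mono {A : Finset V} {M M' : Finset (Sym2 V)} (h : M ⊆ M') :
    internalEdges A M ⊆ internalEdges A M' :=
  filter_subset_filter _ h

lemma InternallyMaximum.mono {A : Finset V} {M M' : Finset (Sym2 V)}
    (hM : InternallyMaximum G A M) (h : M ⊆ M') : InternallyMaximum G A M' :=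
  fun N hN hNA => (hM N hN hNA).trans (card_le_card (internalEdges_mono h))

lemma IsMatching.card_le_card_of_forall_exists_mem {N : Finset (Sym2 V)} (hN : IsMatching G N)
    {S : Finset V} (hS : ∀ e ∈ N, ∃ v ∈ S, v ∈ e) : N.card ≤ S.card :=
  card_le_card_of_forall_subsingleton (fun e v => v ∈ e) hS
    fun v _ _ he _ hf => hN.2 v _ he.1 _ hf.1 he.2 hf.2

lemma covers_iff_mem_biUnion_toFinset [DecidableEq V] {M : Finset (Sym2 V)} {v : V} :
    Covers M v ↔ v ∈ M.biUnion Sym2.toFinset := by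
  simp only [Covers, mem_biUnion, Sym2.mem_toFinset]

lemma card_biUnion_toFinset_le [DecidableEq V] (M : Finset (Sym2 V)) :
    (M.biUnion Sym2.toFinset).card ≤ 2 * M.card := by
  calc (M.biUnion Sym2.toFinset).card
      ≤ ∑ e ∈ M, e.toFinset.card := card_biUnion_le
    _ ≤ ∑ _e ∈ M, 2 := sum_le_sum fun e _ => by rw [Sym2.card_toFinset]; split_ifs <;> omega
    _ = 2 * M.card := by rw [sum_const, smul_eq_mul, mul_comm]

lemma IsMatching.exists_covers_of_not_isMatching_insert [DecidableEq V]
    {M : Finset (Sym2 V)} (hM : IsMatching G M) {e : Sym2 V} (he : e ∈ G.edgeSet)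
    (hins : ¬IsMatching G (insert e M)) : ∃ v ∈ e, Covers M v := by
  have hsub : ↑(insert e M) ⊆ G.edgeSet := by
    rw [coe_insert]
    exact Set.insert_subset he hM.1
  simp only [IsMatching, hsub, true_and, not_forall] at hins
  obtain ⟨v, f, hf, f', hf', hvf, hvf', hne⟩ := hins
  rw [mem_insert] at hf hf'
  rcases hf with rfl | hf <;> rcases hf' with rfl | hf'
  · exact absurd rfl hne
  · exact ⟨v, hvf, f', hf', hvf'⟩
  · exact ⟨v, hvf', f, hf, hvf⟩
  · exact absurd (hM.2 v f hf f' hf' hvf hvf') hne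

lemma IsMatching.card_le_two_mul_of_maximal [DecidableEq V] {M N : Finset (Sym2 V)}
    (hM : IsMatching G M) (hmax : ∀ e ∈ G.edgeSet, e ∉ M → ¬IsMatching G (insert e M))
    (hN : IsMatching G N) : N.card ≤ 2 * M.card := by
  refine (hN.card_le_card_of_forall_exists_mem fun e he => ?_).trans
    (card_biUnion_toFinset_le M)
  simp only [← covers_iff_mem_biUnion_toFinset]
  by_cases heM : e ∈ M
  · induction e with
    | h a b => exact ⟨a, ⟨s(a, b), heM, Sym2.mem_mk_left a b⟩, Sym2.mem_mk_left a b⟩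
  · obtain ⟨v, hve, hv⟩ := hM.exists_covers_of_not_isMatching_insert (hN.1 he)
      (hmax e (hN.1 he) heM)
    exact ⟨v, hv, hve⟩

end

theorem stmt_18_general {V : Type*} [DecidableEq V] (G : SimpleGraph V) (V₁ V₂ : Finset V)
    (M : Finset (Sym2 V)) (hM : IsMatching G M)
    (hres1 : ∀ N : Finset (Sym2 V), IsMatching G N → (∀ e ∈ N, ∀ v ∈ e, v ∈ V₁) →
      N.card ≤ (internalEdges V₁ M).card)
    (hres2 : ∀ N : Finset (Sym2 V), IsMatching G N → (∀ e ∈ N, ∀ v ∈ e, v ∈ V₂) →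
      N.card ≤ (internalEdges V₂ M).card)
    (hopt : ∀ N : Finset (Sym2 V), IsMatching G N →
      ((∀ N' : Finset (Sym2 V), IsMatching G N' → (∀ e ∈ N', ∀ v ∈ e, v ∈ V₁) →
        N'.card ≤ (internalEdges V₁ N).card) ∧
       (∀ N' : Finset (Sym2 V), IsMatching G N' → (∀ e ∈ N', ∀ v ∈ e, v ∈ V₂) →
        N'.card ≤ (internalEdges V₂ N).card)) →
      N.card ≤ M.card) :
    (∀ e ∈ G.edgeSet, e ∉ M → ¬ IsMatching G (insert e M)) ∧
    (∀ N : Finset (Sym2 V), IsMatching G N → N.card ≤ 2 * M.card) := by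
  have hmax : ∀ e ∈ G.edgeSet, e ∉ M → ¬ IsMatching G (insert e M) := by
    intro e _ heM hins
    have hle := hopt _ hins
      ⟨InternallyMaximum.mono (A := V₁) hres1 (subset_insert e M),
        InternallyMaximum.mono (A := V₂) hres2 (subset_insert e M)⟩
    rw [card_insert_of_notMem heM] at hle
    omega
  exact ⟨hmax, fun N hN => hM.card_le_two_mul_of_maximal hmax hN⟩

/-- For two agents with bipartition `({1},{2})`, the output of Match — a maximum
cardinality matching among those restricting to maximum matchings on `G[V₁]` and
`G[V₂]` — is inclusion-maximal in `G`, and hence of cardinality at least half that of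
any matching of `G`. -/
theorem stmt_18 {V : Type*} [DecidableEq V] (G : SimpleGraph V) (V₁ V₂ : Finset V)
    (hpart : ∀ v : V, v ∈ V₁ ∨ v ∈ V₂) (hdisj : Disjoint V₁ V₂)
    (M : Finset (Sym2 V)) (hM : IsMatching G M)
    (hres1 : ∀ N : Finset (Sym2 V), IsMatching G N → (∀ e ∈ N, ∀ v ∈ e, v ∈ V₁) →
      N.card ≤ (internalEdges V₁ M).card)
    (hres2 : ∀ N : Finset (Sym2 V), IsMatching G N → (∀ e ∈ N, ∀ v ∈ e, v ∈ V₂) →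
      N.card ≤ (internalEdges V₂ M).card)
    (hopt : ∀ N : Finset (Sym2 V), IsMatching G N →
      ((∀ N' : Finset (Sym2 V), IsMatching G N' → (∀ e ∈ N', ∀ v ∈ e, v ∈ V₁) →
        N'.card ≤ (internalEdges V₁ N).card) ∧
       (∀ N' : Finset (Sym2 V), IsMatching G N' → (∀ e ∈ N', ∀ v ∈ e, v ∈ V₂) →
        N'.card ≤ (internalEdges V₂ N).card)) →
      N.card ≤ M.card) :
    (∀ e ∈ G.edgeSet, e ∉ M → ¬ IsMatching G (insert e M)) ∧
    (∀ N : Finset (Sym2 V), IsMatching G N → N.card ≤ 2 * M.card) :=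
  stmt_18_general G V₁ V₂ M hM hres1 hres2 hopt
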